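/- arXiv:1304.1974 — 3 statements merged into one kernel-verified Lean document; each statement's English description precedes it below -/
import Mathlib

section
/- Let p be an odd prime and n ≥ 4 an integer. The group G with presentation ⟨x₁, x₂, x₃, x₄ ∣ x₁^{p^n} = x₂^{p⁴} = x₃^{p⁴} = x₄^{p²} = 1, [x₁,x₂] = x₂^{p²}, [x₁,x₃] = x₂^{p²}, [x₁,x₄] = x₃^{p²}, [x₂,x₃] = x₁^{p^{n-2}}, [x₂,x₄] = x₃^{p²}, [x₃,x₄] = x₂^{p²}⟩ has order p^{n+10} and nilpotency class 2. -/
set_option linter.unusedSectionVars false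
set_option linter.unreachableTactic false
set_option linter.unusedTactic false
open scoped commutatorElement

/-- commutator in the convention [a,b] = a⁻¹b⁻¹ab -/
def cmt {G : Type*} [Group G] (a b : G) : G := a⁻¹ * b⁻¹ * a * b

/-- relations of the group G defined in (3.1) of the paper -/
def GRels (p n : ℕ) : Set (FreeGroup (Fin 4)) :=
  let x : Fin 4 → FreeGroup (Fin 4) := FreeGroup.of
  { (x 0) ^ p ^ n, (x 1) ^ p ^ 4, (x 2) ^ p ^ 4, (x 3) ^ p ^ 2,
    cmt (x 0) (x 1) * ((x 1) ^ p ^ 2)⁻¹,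
    cmt (x 0) (x 2) * ((x 1) ^ p ^ 2)⁻¹,
    cmt (x 0) (x 3) * ((x 2) ^ p ^ 2)⁻¹,
    cmt (x 1) (x 2) * ((x 0) ^ p ^ (n - 2))⁻¹,
    cmt (x 1) (x 3) * ((x 2) ^ p ^ 2)⁻¹,
    cmt (x 2) (x 3) * ((x 1) ^ p ^ 2)⁻¹ }

namespace GG

lemma cast_mul_mod (N Mo k : ℕ) (h : N * Mo = k) (m : ℕ) :
    ((N : ZMod k)) * ((m % Mo : ℕ) : ZMod k) = (N : ZMod k) * (m : ℕ) := by
  conv_rhs => rw [← Nat.div_add_mod m Mo]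
  push_cast
  rw [mul_add, ← mul_assoc, ← Nat.cast_mul N Mo, h, ZMod.natCast_self, zero_mul, zero_add]

@[ext]
structure M (p n : ℕ) where
  a : ZMod (p ^ n)
  b : ZMod (p ^ 4)
  c : ZMod (p ^ 4)
  d : ZMod (p ^ 2)

namespace M

variable {p n : ℕ}

instance instNZ [hp : Fact p.Prime] (k : ℕ) : NeZero (p ^ k) :=
  ⟨pow_ne_zero k hp.out.ne_zero⟩

section maps
variable (p n) [Fact p.Prime] [Fact (4 ≤ n)]

lemma hn4 : 4 ≤ n := Fact.out

lemma two_le_n : 2 ≤ n := le_trans (by norm_num) (hn4 n)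

def pi4 : ZMod (p ^ 4) →+* ZMod (p ^ 2) := ZMod.castHom (pow_dvd_pow p (by norm_num : 2 ≤ 4)) _

def pin : ZMod (p ^ n) →+* ZMod (p ^ 2) := ZMod.castHom (pow_dvd_pow p (two_le_n n)) _

def e4 : ZMod (p ^ 2) →+ ZMod (p ^ 4) where
  toFun w := ((p ^ 2 : ℕ) : ZMod (p ^ 4)) * (w.val : ZMod (p ^ 4))
  map_zero' := by simp
  map_add' := by
    intro w v
    rw [ZMod.val_add, cast_mul_mod (p^2) (p^2) (p^4) (by ring)]
    push_cast
    ring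

def en : ZMod (p ^ 2) →+ ZMod (p ^ n) where
  toFun w := ((p ^ (n - 2) : ℕ) : ZMod (p ^ n)) * (w.val : ZMod (p ^ n))
  map_zero' := by simp
  map_add' := by
    intro w v
    rw [ZMod.val_add, cast_mul_mod (p^(n-2)) (p^2) (p^n)
      (by rw [← pow_add, Nat.sub_add_cancel (two_le_n n)])]
    push_cast
    ring

lemma e4_natCast (m : ℕ) : e4 p ((m : ZMod (p ^ 2))) = ((p ^ 2 * m : ℕ) : ZMod (p ^ 4)) := by
  show ((p ^ 2 : ℕ) : ZMod (p ^ 4)) * _ = _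
  rw [ZMod.val_natCast, cast_mul_mod (p^2) (p^2) (p^4) (by ring)]
  push_cast; ring

lemma en_natCast (m : ℕ) : en p n ((m : ZMod (p ^ 2))) = ((p ^ (n - 2) * m : ℕ) : ZMod (p ^ n)) := by
  show ((p ^ (n - 2) : ℕ) : ZMod (p ^ n)) * _ = _
  rw [ZMod.val_natCast, cast_mul_mod (p^(n-2)) (p^2) (p^n)
    (by rw [← pow_add, Nat.sub_add_cancel (two_le_n n)])]
  push_cast; ring

@[simp] lemma pi4_e4 (w : ZMod (p ^ 2)) : pi4 p (e4 p w) = 0 := by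
  show pi4 p (((p ^ 2 : ℕ) : ZMod (p ^ 4)) * _) = 0
  rw [map_mul, map_natCast, ZMod.natCast_self, zero_mul]

@[simp] lemma pin_en (w : ZMod (p ^ 2)) : pin p n (en p n w) = 0 := by
  show pin p n (((p ^ (n - 2) : ℕ) : ZMod (p ^ n)) * _) = 0
  have : ((p ^ (n - 2) : ℕ) : ZMod (p ^ 2)) = 0 := by
    rw [ZMod.natCast_eq_zero_iff]
    exact pow_dvd_pow p (by have := hn4 n; omega)
  rw [map_mul, map_natCast, this, zero_mul]

end maps

section group
variable [Fact p.Prime] [Fact (4 ≤ n)]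

instance : One (M p n) := ⟨⟨0, 0, 0, 0⟩⟩

instance : Mul (M p n) :=
  ⟨fun x y =>
    ⟨x.a + y.a - en p n (pi4 p x.c * pi4 p y.b),
     x.b + y.b - e4 p ((pi4 p x.b + pi4 p x.c) * pin p n y.a + x.d * pi4 p y.c),
     x.c + y.c - e4 p (x.d * (pin p n y.a + pi4 p y.b)),
     x.d + y.d⟩⟩

instance : Inv (M p n) :=
  ⟨fun x =>
    ⟨-x.a - en p n (pi4 p x.c * pi4 p x.b),
     -x.b - e4 p ((pi4 p x.b + pi4 p x.c) * pin p n x.a + x.d * pi4 p x.c),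
     -x.c - e4 p (x.d * (pin p n x.a + pi4 p x.b)),
     -x.d⟩⟩

@[simp] lemma one_a : (1 : M p n).a = 0 := rfl
@[simp] lemma one_b : (1 : M p n).b = 0 := rfl
@[simp] lemma one_c : (1 : M p n).c = 0 := rfl
@[simp] lemma one_d : (1 : M p n).d = 0 := rfl

lemma mul_a (x y : M p n) : (x * y).a = x.a + y.a - en p n (pi4 p x.c * pi4 p y.b) := rfl
lemma mul_b (x y : M p n) :
    (x * y).b = x.b + y.b - e4 p ((pi4 p x.b + pi4 p x.c) * pin p n y.a + x.d * pi4 p y.c) := rfl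
lemma mul_c (x y : M p n) : (x * y).c = x.c + y.c - e4 p (x.d * (pin p n y.a + pi4 p y.b)) := rfl
@[simp] lemma mul_d (x y : M p n) : (x * y).d = x.d + y.d := rfl

lemma inv_a (x : M p n) : (x⁻¹).a = -x.a - en p n (pi4 p x.c * pi4 p x.b) := rfl
lemma inv_b (x : M p n) :
    (x⁻¹).b = -x.b - e4 p ((pi4 p x.b + pi4 p x.c) * pin p n x.a + x.d * pi4 p x.c) := rfl
lemma inv_c (x : M p n) : (x⁻¹).c = -x.c - e4 p (x.d * (pin p n x.a + pi4 p x.b)) := rfl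
@[simp] lemma inv_d (x : M p n) : (x⁻¹).d = -x.d := rfl

@[simp] lemma pa (x y : M p n) : pin p n (x * y).a = pin p n x.a + pin p n y.a := by
  rw [mul_a, map_sub, map_add, pin_en, sub_zero]

@[simp] lemma pb (x y : M p n) : pi4 p (x * y).b = pi4 p x.b + pi4 p y.b := by
  rw [mul_b, map_sub, map_add, pi4_e4, sub_zero]

@[simp] lemma pc (x y : M p n) : pi4 p (x * y).c = pi4 p x.c + pi4 p y.c := by
  rw [mul_c, map_sub, map_add, pi4_e4, sub_zero]

@[simp] lemma ia (x : M p n) : pin p n (x⁻¹).a = -pin p n x.a := by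
  rw [inv_a, map_sub, map_neg, pin_en, sub_zero]

@[simp] lemma ib (x : M p n) : pi4 p (x⁻¹).b = -pi4 p x.b := by
  rw [inv_b, map_sub, map_neg, pi4_e4, sub_zero]

@[simp] lemma ic (x : M p n) : pi4 p (x⁻¹).c = -pi4 p x.c := by
  rw [inv_c, map_sub, map_neg, pi4_e4, sub_zero]

instance : Group (M p n) := by
  apply Group.ofLeftAxioms
  · intro x y z
    ext
    · simp only [mul_a]
      simp only [pb, pc]
      simp only [add_mul, mul_add, map_add]
      abel
    · rw [mul_b (x*y) z, mul_b x (y*z)]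
      simp only [pa, pb, pc, mul_d]
      rw [mul_b x y, mul_b y z]
      simp only [add_mul, mul_add, map_add]
      abel
    · simp only [mul_c]
      simp only [pa, pb, mul_d]
      simp only [add_mul, mul_add, map_add]
      abel
    · simp only [mul_d]; ring
  · intro x
    ext
    · simp [mul_a]
    · simp [mul_b]
    · simp [mul_c]
    · simp
  · intro x
    ext
    · simp only [mul_a, inv_a, one_a]
      simp only [ia, ib, ic, inv_d]
      simp only [add_mul, mul_add, neg_mul, mul_neg, neg_neg, map_add, map_neg]
      abel
    · rw [mul_b x⁻¹ x, one_b]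
      simp only [ia, ib, ic, inv_d]
      rw [inv_b x]
      simp only [add_mul, mul_add, neg_mul, mul_neg, neg_neg, neg_add, map_add, map_neg]
      abel
    · simp only [mul_c, inv_c, one_c]
      simp only [ia, ib, ic, inv_d]
      simp only [add_mul, mul_add, neg_mul, mul_neg, neg_neg, neg_add, map_add, map_neg]
      abel
    · simp

@[simp] lemma pi4_zero : pi4 p (0 : ZMod (p^4)) = 0 := map_zero _
@[simp] lemma pin_zero : pin p n (0 : ZMod (p^n)) = 0 := map_zero _

def g1 : M p n := ⟨1, 0, 0, 0⟩
def g2 : M p n := ⟨0, 1, 0, 0⟩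
def g3 : M p n := ⟨0, 0, 1, 0⟩
def g4 : M p n := ⟨0, 0, 0, 1⟩

lemma g1_pow (k : ℕ) : (g1 : M p n) ^ k = ⟨(k : ZMod (p^n)), 0, 0, 0⟩ := by
  induction k with
  | zero => ext <;> simp
  | succ k ih =>
    rw [pow_succ, ih]
    ext <;> simp [mul_a, mul_b, mul_c, g1] <;> push_cast <;> ring

lemma g2_pow (k : ℕ) : (g2 : M p n) ^ k = ⟨0, (k : ZMod (p^4)), 0, 0⟩ := by
  induction k with
  | zero => ext <;> simp
  | succ k ih =>
    rw [pow_succ, ih]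
    ext <;> simp [mul_a, mul_b, mul_c, g2] <;> push_cast <;> ring

lemma g3_pow (k : ℕ) : (g3 : M p n) ^ k = ⟨0, 0, (k : ZMod (p^4)), 0⟩ := by
  induction k with
  | zero => ext <;> simp
  | succ k ih =>
    rw [pow_succ, ih]
    ext <;> simp [mul_a, mul_b, mul_c, g3] <;> push_cast <;> ring

lemma g4_pow (k : ℕ) : (g4 : M p n) ^ k = ⟨0, 0, 0, (k : ZMod (p^2))⟩ := by
  induction k with
  | zero => ext <;> simp
  | succ k ih =>
    rw [pow_succ, ih]
    ext <;> simp [mul_a, mul_b, mul_c, g4] <;> push_cast <;> ring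

/-- elements with trivial projections are central -/
lemma central_of (z : M p n) (h1 : pin p n z.a = 0) (h2 : pi4 p z.b = 0)
    (h3 : pi4 p z.c = 0) (h4 : z.d = 0) (x : M p n) : x * z = z * x := by
  ext
  · rw [mul_a, mul_a, h3, h2]
    simp only [mul_zero, zero_mul, map_zero, sub_zero]
    ring
  · rw [mul_b, mul_b, h1, h2, h3, h4]
    simp only [mul_zero, zero_mul, zero_add, add_zero, map_zero, sub_zero]
    ring
  · rw [mul_c, mul_c, h1, h2, h4]
    simp only [mul_zero, zero_mul, zero_add, add_zero, map_zero, sub_zero]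
    ring
  · simp [add_comm]

lemma commutator_central (x y w : M p n) : ⁅x, y⁆ * w = w * ⁅x, y⁆ := by
  refine (central_of _ ?_ ?_ ?_ ?_ w).symm
  · simp [commutatorElement_def]
  · simp [commutatorElement_def]
  · simp [commutatorElement_def]
  · simp [commutatorElement_def]

lemma prod_basis (A : ZMod (p^n)) (B C : ZMod (p^4)) (D : ZMod (p^2)) :
    (⟨A,0,0,0⟩ : M p n) * (⟨0,B,0,0⟩ * (⟨0,0,C,0⟩ * ⟨0,0,0,D⟩)) = ⟨A,B,C,D⟩ := by
  have h1 : (⟨0,0,C,0⟩ : M p n) * ⟨0,0,0,D⟩ = ⟨0,0,C,D⟩ := by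
    ext <;> simp [mul_a, mul_b, mul_c]
  have h2 : (⟨0,B,0,0⟩ : M p n) * ⟨0,0,C,D⟩ = ⟨0,B,C,D⟩ := by
    ext <;> simp [mul_a, mul_b, mul_c]
  have h3 : (⟨A,0,0,0⟩ : M p n) * ⟨0,B,C,D⟩ = ⟨A,B,C,D⟩ := by
    ext <;> simp [mul_a, mul_b, mul_c]
  rw [h1, h2, h3]

lemma card_M : Nat.card (M p n) = p ^ (n + 10) := by
  have e : M p n ≃ (ZMod (p^n) × ZMod (p^4) × ZMod (p^4) × ZMod (p^2)) :=
    ⟨fun x => (x.a, x.b, x.c, x.d), fun t => ⟨t.1, t.2.1, t.2.2.1, t.2.2.2⟩,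
      fun x => rfl, fun t => rfl⟩
  rw [Nat.card_congr e]
  simp only [Nat.card_prod, Nat.card_zmod]
  rw [← pow_add, ← pow_add, ← pow_add]

lemma e4_one : e4 p (1 : ZMod (p^2)) = ((p^2 : ℕ) : ZMod (p^4)) := by
  rw [← Nat.cast_one, e4_natCast]; norm_num

lemma en_one : en p n (1 : ZMod (p^2)) = ((p^(n-2) : ℕ) : ZMod (p^n)) := by
  rw [← Nat.cast_one, en_natCast]; norm_num

lemma cmt_eq {H : Type*} [Group H] (a b : H) : cmt a b = (b * a)⁻¹ * (a * b) := by
  simp only [cmt, mul_inv_rev]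
  group

lemma cmt_g1g2 : cmt (g1 : M p n) g2 = g2 ^ (p^2) := by
  have hu : (g1 : M p n) * g2 = ⟨1, 1, 0, 0⟩ := by
    ext <;> simp [mul_a, mul_b, mul_c, g1, g2]
  have hv : (g2 : M p n) * g1 = ⟨1, 1 - e4 p 1, 0, 0⟩ := by
    ext <;> simp [mul_a, mul_b, mul_c, g1, g2]
  have hvi : (⟨1, 1 - e4 p 1, 0, 0⟩ : M p n)⁻¹ = ⟨-1, -1, 0, 0⟩ := by
    ext <;> simp [inv_a, inv_b, inv_c]
  have hw : (⟨-1, -1, 0, 0⟩ : M p n) * ⟨1, 1, 0, 0⟩ = ⟨0, e4 p 1, 0, 0⟩ := by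
    ext <;> simp [mul_a, mul_b, mul_c]
  rw [cmt_eq, hu, hv, hvi, hw, g2_pow]
  ext <;> simp [e4_one]

lemma cmt_g1g3 : cmt (g1 : M p n) g3 = g2 ^ (p^2) := by
  have hu : (g1 : M p n) * g3 = ⟨1, 0, 1, 0⟩ := by
    ext <;> simp [mul_a, mul_b, mul_c, g1, g3]
  have hv : (g3 : M p n) * g1 = ⟨1, -e4 p 1, 1, 0⟩ := by
    ext <;> simp [mul_a, mul_b, mul_c, g1, g3]
  have hvi : (⟨1, -e4 p 1, 1, 0⟩ : M p n)⁻¹ = ⟨-1, 0, -1, 0⟩ := by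
    ext <;> simp [inv_a, inv_b, inv_c]
  have hw : (⟨-1, 0, -1, 0⟩ : M p n) * ⟨1, 0, 1, 0⟩ = ⟨0, e4 p 1, 0, 0⟩ := by
    ext <;> simp [mul_a, mul_b, mul_c]
  rw [cmt_eq, hu, hv, hvi, hw, g2_pow]
  ext <;> simp [e4_one]

lemma cmt_g1g4 : cmt (g1 : M p n) g4 = g3 ^ (p^2) := by
  have hu : (g1 : M p n) * g4 = ⟨1, 0, 0, 1⟩ := by
    ext <;> simp [mul_a, mul_b, mul_c, g1, g4]
  have hv : (g4 : M p n) * g1 = ⟨1, 0, -e4 p 1, 1⟩ := by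
    ext <;> simp [mul_a, mul_b, mul_c, g1, g4]
  have hvi : (⟨1, 0, -e4 p 1, 1⟩ : M p n)⁻¹ = ⟨-1, 0, 0, -1⟩ := by
    ext <;> simp [inv_a, inv_b, inv_c]
  have hw : (⟨-1, 0, 0, -1⟩ : M p n) * ⟨1, 0, 0, 1⟩ = ⟨0, 0, e4 p 1, 0⟩ := by
    ext <;> simp [mul_a, mul_b, mul_c]
  rw [cmt_eq, hu, hv, hvi, hw, g3_pow]
  ext <;> simp [e4_one]

lemma cmt_g2g3 : cmt (g2 : M p n) g3 = g1 ^ (p^(n-2)) := by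
  have hu : (g2 : M p n) * g3 = ⟨0, 1, 1, 0⟩ := by
    ext <;> simp [mul_a, mul_b, mul_c, g2, g3]
  have hv : (g3 : M p n) * g2 = ⟨-en p n 1, 1, 1, 0⟩ := by
    ext <;> simp [mul_a, mul_b, mul_c, g2, g3]
  have hvi : (⟨-en p n 1, 1, 1, 0⟩ : M p n)⁻¹ = ⟨0, -1, -1, 0⟩ := by
    ext <;> simp [inv_a, inv_b, inv_c]
  have hw : (⟨0, -1, -1, 0⟩ : M p n) * ⟨0, 1, 1, 0⟩ = ⟨en p n 1, 0, 0, 0⟩ := by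
    ext <;> simp [mul_a, mul_b, mul_c]
  rw [cmt_eq, hu, hv, hvi, hw, g1_pow]
  ext <;> simp [en_one]

lemma cmt_g2g4 : cmt (g2 : M p n) g4 = g3 ^ (p^2) := by
  have hu : (g2 : M p n) * g4 = ⟨0, 1, 0, 1⟩ := by
    ext <;> simp [mul_a, mul_b, mul_c, g2, g4]
  have hv : (g4 : M p n) * g2 = ⟨0, 1, -e4 p 1, 1⟩ := by
    ext <;> simp [mul_a, mul_b, mul_c, g2, g4]
  have hvi : (⟨0, 1, -e4 p 1, 1⟩ : M p n)⁻¹ = ⟨0, -1, 0, -1⟩ := by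
    ext <;> simp [inv_a, inv_b, inv_c]
  have hw : (⟨0, -1, 0, -1⟩ : M p n) * ⟨0, 1, 0, 1⟩ = ⟨0, 0, e4 p 1, 0⟩ := by
    ext <;> simp [mul_a, mul_b, mul_c]
  rw [cmt_eq, hu, hv, hvi, hw, g3_pow]
  ext <;> simp [e4_one]

lemma cmt_g3g4 : cmt (g3 : M p n) g4 = g2 ^ (p^2) := by
  have hu : (g3 : M p n) * g4 = ⟨0, 0, 1, 1⟩ := by
    ext <;> simp [mul_a, mul_b, mul_c, g3, g4]
  have hv : (g4 : M p n) * g3 = ⟨0, -e4 p 1, 1, 1⟩ := by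
    ext <;> simp [mul_a, mul_b, mul_c, g3, g4]
  have hvi : (⟨0, -e4 p 1, 1, 1⟩ : M p n)⁻¹ = ⟨0, 0, -1, -1⟩ := by
    ext <;> simp [inv_a, inv_b, inv_c]
  have hw : (⟨0, 0, -1, -1⟩ : M p n) * ⟨0, 0, 1, 1⟩ = ⟨0, e4 p 1, 0, 0⟩ := by
    ext <;> simp [mul_a, mul_b, mul_c]
  rw [cmt_eq, hu, hv, hvi, hw, g2_pow]
  ext <;> simp [e4_one]

def gen : Fin 4 → M p n := ![g1, g2, g3, g4]

lemma g1_order : (g1 : M p n) ^ (p^n) = 1 := by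
  rw [g1_pow]; ext <;> simp
lemma g2_order : (g2 : M p n) ^ (p^4) = 1 := by
  rw [g2_pow]; ext <;> simp
lemma g3_order : (g3 : M p n) ^ (p^4) = 1 := by
  rw [g3_pow]; ext <;> simp
lemma g4_order : (g4 : M p n) ^ (p^2) = 1 := by
  rw [g4_pow]; ext <;> simp

lemma relcheck : ∀ r ∈ GRels p n, FreeGroup.lift (gen (p := p) (n := n)) r = 1 := by
  intro r hr
  simp only [GRels, Set.mem_insert_iff, Set.mem_singleton_iff] at hr
  have L : ∀ i : Fin 4, FreeGroup.lift (gen (p := p) (n := n)) (FreeGroup.of i) = gen i :=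
    fun i => FreeGroup.lift_apply_of
  have e0 : gen (p := p) (n := n) 0 = g1 := rfl
  have e1 : gen (p := p) (n := n) 1 = g2 := rfl
  have e2 : gen (p := p) (n := n) 2 = g3 := rfl
  have e3 : gen (p := p) (n := n) 3 = g4 := rfl
  rcases hr with rfl|rfl|rfl|rfl|rfl|rfl|rfl|rfl|rfl|rfl <;>
    simp only [cmt, map_mul, map_inv, map_pow, L, e0, e1, e2, e3, mul_inv_eq_one]
  · exact g1_order
  · exact g2_order
  · exact g3_order
  · exact g4_order
  · simpa [cmt] using cmt_g1g2 (p := p) (n := n)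
  · simpa [cmt] using cmt_g1g3 (p := p) (n := n)
  · simpa [cmt] using cmt_g1g4 (p := p) (n := n)
  · simpa [cmt] using cmt_g2g3 (p := p) (n := n)
  · simpa [cmt] using cmt_g2g4 (p := p) (n := n)
  · simpa [cmt] using cmt_g3g4 (p := p) (n := n)

end group

end M

section generic
variable {H : Type*} [Group H]

lemma conj_of_cmt {a b z : H} (h : cmt a b = z) : b⁻¹ * a * b = a * z := by
  rw [← h, cmt]; group

lemma conj_inv_of_cmt {a b z : H} (h : cmt a b = z) : a⁻¹ * b * a = b * z⁻¹ := by
  rw [← h, cmt]; group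

lemma commute_of_conj {x y : H} (e : y⁻¹ * x * y = x) : Commute y x := by
  have h : x * y = y * (y⁻¹ * x * y) := by group
  rw [e] at h
  exact h.symm

lemma conj_pow {x y z : H} (h : y⁻¹ * x * y = x * z) (hzx : Commute z x) (m : ℕ) :
    y⁻¹ * x ^ m * y = x ^ m * z ^ m := by
  induction m with
  | zero => group
  | succ m ih =>
    have e : y⁻¹ * x ^ (m+1) * y = (y⁻¹ * x ^ m * y) * (y⁻¹ * x * y) := by
      rw [pow_succ]; group
    rw [e, ih, h, pow_succ, pow_succ]
    calc x^m * z^m * (x * z) = x^m * (z^m * x) * z := by simp [mul_assoc]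
    _ = x^m * (x * z^m) * z := by rw [(hzx.pow_left m).eq]
    _ = x^m * x * (z^m * z) := by simp [mul_assoc]

lemma conj_pow' {x y z : H} (h : y⁻¹ * x * y = x * z) (hzy : Commute z y) (v : ℕ) :
    (y ^ v)⁻¹ * x * y ^ v = x * z ^ v := by
  induction v with
  | zero => group
  | succ v ih =>
    have e : (y^(v+1))⁻¹ * x * y^(v+1) = y⁻¹ * ((y^v)⁻¹ * x * y^v) * y := by
      rw [pow_succ]; group
    rw [e, ih]
    have e2 : y⁻¹ * (x * z ^ v) * y = (y⁻¹ * x * y) * (y⁻¹ * z^v * y) := by group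
    have e3 : y⁻¹ * z^v * y = z^v := by
      rw [mul_assoc, (hzy.pow_left v).eq]; group
    rw [e2, e3, h, pow_succ']
    simp [mul_assoc]

lemma swap_pow {x y z : H} (h : y⁻¹ * x * y = x * z) (hzx : Commute z x) (hzy : Commute z y)
    (u v : ℕ) : y ^ v * x ^ u = x ^ u * y ^ v * (z ^ (u * v))⁻¹ := by
  have h1 : (y ^ v)⁻¹ * x ^ u * y ^ v = x ^ u * z ^ (u*v) := by
    have h2 : y⁻¹ * x ^ u * y = x ^ u * z ^ u := conj_pow h hzx u
    have h3 := conj_pow' h2 (hzy.pow_left u) v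
    rwa [← pow_mul] at h3
  have h4 : x ^ u * y ^ v = y ^ v * ((y^v)⁻¹ * x ^ u * y ^ v) := by group
  rw [h1] at h4
  rw [h4]; group

lemma pow_mod {g : H} {N : ℕ} (hg : g ^ N = 1) (m : ℕ) : g ^ (m % N) = g ^ m := by
  conv_rhs => rw [← Nat.div_add_mod m N]
  rw [pow_add, pow_mul, hg, one_pow, one_mul]

lemma pow_val_natCast {g : H} {N : ℕ} [NeZero N] (hg : g ^ N = 1) (m : ℕ) :
    g ^ ((m : ZMod N)).val = g ^ m := by
  rw [ZMod.val_natCast]; exact pow_mod hg m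

lemma pow_val_add {g : H} {N : ℕ} [NeZero N] (hg : g ^ N = 1) (x y : ZMod N) :
    g ^ ((x + y).val) = g ^ x.val * g ^ y.val := by
  rw [ZMod.val_add, pow_mod hg, pow_add]

lemma pow_val_one {g : H} {N : ℕ} [NeZero N] (hg : g ^ N = 1) :
    g ^ ((1 : ZMod N)).val = g := by
  rw [← Nat.cast_one, pow_val_natCast hg, pow_one]

lemma pow_val_neg {g : H} {N : ℕ} [NeZero N] (hg : g ^ N = 1) (x : ZMod N) :
    g ^ ((-x).val) = (g ^ x.val)⁻¹ := by
  have h : g ^ ((-x).val) * g ^ (x.val) = 1 := by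
    rw [← pow_val_add hg, neg_add_cancel]
    simp [ZMod.val_zero]
  exact eq_inv_of_mul_eq_one_left h

lemma pow_val_sub {g : H} {N : ℕ} [NeZero N] (hg : g ^ N = 1) (x y : ZMod N) :
    g ^ ((x - y).val) = g ^ x.val * (g ^ y.val)⁻¹ := by
  rw [sub_eq_add_neg, pow_val_add hg, pow_val_neg hg]

end generic

section pres
variable (p n : ℕ) [Fact p.Prime] [Fact (4 ≤ n)]

open M

def X (i : Fin 4) : PresentedGroup (GRels p n) := PresentedGroup.of i

lemma relhold {r : FreeGroup (Fin 4)} (h : r ∈ GRels p n) :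
    PresentedGroup.mk (GRels p n) r = 1 :=
  (QuotientGroup.eq_one_iff r).2 (Subgroup.subset_normalClosure h)

lemma O1 : (X p n 0) ^ (p ^ n) = 1 := by
  have h := relhold p n (show FreeGroup.of 0 ^ p ^ n ∈ GRels p n by simp [GRels])
  rw [map_pow] at h
  exact h

lemma O2 : (X p n 1) ^ (p ^ 4) = 1 := by
  have h := relhold p n (show FreeGroup.of 1 ^ p ^ 4 ∈ GRels p n by simp [GRels])
  rw [map_pow] at h
  exact h

lemma O3 : (X p n 2) ^ (p ^ 4) = 1 := by
  have h := relhold p n (show FreeGroup.of 2 ^ p ^ 4 ∈ GRels p n by simp [GRels])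
  rw [map_pow] at h
  exact h

lemma O4 : (X p n 3) ^ (p ^ 2) = 1 := by
  have h := relhold p n (show FreeGroup.of 3 ^ p ^ 2 ∈ GRels p n by simp [GRels])
  rw [map_pow] at h
  exact h

lemma cmt_rel {i j : Fin 4} {w : FreeGroup (Fin 4)}
    (h : cmt (FreeGroup.of i) (FreeGroup.of j) * w⁻¹ ∈ GRels p n) :
    cmt (X p n i) (X p n j) = PresentedGroup.mk (GRels p n) w := by
  have h2 := relhold p n h
  rw [map_mul, map_inv, mul_inv_eq_one] at h2
  simp only [cmt, map_mul, map_inv] at h2 ⊢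
  exact h2

lemma R12 : cmt (X p n 0) (X p n 1) = (X p n 1) ^ (p ^ 2) := by
  have h := cmt_rel p n (i := 0) (j := 1) (w := FreeGroup.of 1 ^ p ^ 2) (by simp [GRels])
  rwa [map_pow] at h

lemma R13 : cmt (X p n 0) (X p n 2) = (X p n 1) ^ (p ^ 2) := by
  have h := cmt_rel p n (i := 0) (j := 2) (w := FreeGroup.of 1 ^ p ^ 2) (by simp [GRels])
  rwa [map_pow] at h

lemma R14 : cmt (X p n 0) (X p n 3) = (X p n 2) ^ (p ^ 2) := by
  have h := cmt_rel p n (i := 0) (j := 3) (w := FreeGroup.of 2 ^ p ^ 2) (by simp [GRels])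
  rwa [map_pow] at h

lemma R23 : cmt (X p n 1) (X p n 2) = (X p n 0) ^ (p ^ (n - 2)) := by
  have h := cmt_rel p n (i := 1) (j := 2) (w := FreeGroup.of 0 ^ p ^ (n-2)) (by simp [GRels])
  rwa [map_pow] at h

lemma R24 : cmt (X p n 1) (X p n 3) = (X p n 2) ^ (p ^ 2) := by
  have h := cmt_rel p n (i := 1) (j := 3) (w := FreeGroup.of 2 ^ p ^ 2) (by simp [GRels])
  rwa [map_pow] at h

lemma R34 : cmt (X p n 2) (X p n 3) = (X p n 1) ^ (p ^ 2) := by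
  have h := cmt_rel p n (i := 2) (j := 3) (w := FreeGroup.of 1 ^ p ^ 2) (by simp [GRels])
  rwa [map_pow] at h

lemma pn2 : p ^ (n - 2) * p ^ 2 = p ^ n := by
  rw [← pow_add, Nat.sub_add_cancel (M.two_le_n n)]

lemma Z2sq : ((X p n 1) ^ (p^2)) ^ (p^2) = 1 := by
  rw [← pow_mul, show p^2 * p^2 = p^4 by ring]; exact O2 p n

lemma Z3sq : ((X p n 2) ^ (p^2)) ^ (p^2) = 1 := by
  rw [← pow_mul, show p^2 * p^2 = p^4 by ring]; exact O3 p n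

lemma Z1sq : ((X p n 0) ^ (p^(n-2))) ^ (p^2) = 1 := by
  rw [← pow_mul, pn2]; exact O1 p n

lemma Z2N : ((X p n 1) ^ (p^2)) ^ (p^(n-2)) = 1 := by
  have e : p^2 * p^(n-2) = p^4 * p^(n-4) := by
    rw [← pow_add, ← pow_add]
    congr 1
    have := M.hn4 n
    omega
  rw [← pow_mul, e, pow_mul, O2 p n, one_pow]

lemma Z3N : ((X p n 2) ^ (p^2)) ^ (p^(n-2)) = 1 := by
  have e : p^2 * p^(n-2) = p^4 * p^(n-4) := by
    rw [← pow_add, ← pow_add]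
    congr 1
    have := M.hn4 n
    omega
  rw [← pow_mul, e, pow_mul, O3 p n, one_pow]

lemma comm_z2_x0 : Commute ((X p n 1)^(p^2)) (X p n 0) := by
  have h := conj_of_cmt (R12 p n)
  have h2 := conj_pow' h ((Commute.refl (X p n 1)).pow_left (p^2)) (p^2)
  rw [Z2sq p n, mul_one] at h2
  exact commute_of_conj h2

lemma comm_z1_x1 : Commute ((X p n 0)^(p^(n-2))) (X p n 1) := by
  have h := conj_inv_of_cmt (R12 p n)
  have h2 := conj_pow' h ((comm_z2_x0 p n).inv_left) (p^(n-2))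
  rw [inv_pow, Z2N p n, inv_one, mul_one] at h2
  exact commute_of_conj h2

lemma comm_z2_x2 : Commute ((X p n 1)^(p^2)) (X p n 2) := by
  have h := conj_of_cmt (R23 p n)
  have h2 := conj_pow h (comm_z1_x1 p n) (p^2)
  rw [Z1sq p n, mul_one] at h2
  exact (commute_of_conj h2).symm

lemma comm_z1_x2 : Commute ((X p n 0)^(p^(n-2))) (X p n 2) := by
  have h := conj_inv_of_cmt (R13 p n)
  have h2 := conj_pow' h ((comm_z2_x0 p n).inv_left) (p^(n-2))
  rw [inv_pow, Z2N p n, inv_one, mul_one] at h2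
  exact commute_of_conj h2

lemma comm_z3_x1 : Commute ((X p n 2)^(p^2)) (X p n 1) := by
  have h := conj_inv_of_cmt (R23 p n)
  have h2 := conj_pow h ((comm_z1_x2 p n).inv_left) (p^2)
  rw [inv_pow, Z1sq p n, inv_one, mul_one] at h2
  exact (commute_of_conj h2).symm

lemma comm_z3_x0 : Commute ((X p n 2)^(p^2)) (X p n 0) := by
  have h := conj_inv_of_cmt (R13 p n)
  have h2 := conj_pow h ((comm_z2_x2 p n).inv_left) (p^2)
  rw [inv_pow, Z2sq p n, inv_one, mul_one] at h2
  exact (commute_of_conj h2).symm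

lemma comm_z3_x3 : Commute ((X p n 2)^(p^2)) (X p n 3) := by
  have h := conj_of_cmt (R34 p n)
  have h2 := conj_pow h (comm_z2_x2 p n) (p^2)
  rw [Z2sq p n, mul_one] at h2
  exact (commute_of_conj h2).symm

lemma comm_z2_x3 : Commute ((X p n 1)^(p^2)) (X p n 3) := by
  have h := conj_of_cmt (R24 p n)
  have h2 := conj_pow h (comm_z3_x1 p n) (p^2)
  rw [Z3sq p n, mul_one] at h2
  exact (commute_of_conj h2).symm

lemma comm_z1_x3 : Commute ((X p n 0)^(p^(n-2))) (X p n 3) := by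
  have h := conj_of_cmt (R14 p n)
  have h2 := conj_pow h (comm_z3_x0 p n) (p^(n-2))
  rw [Z3N p n, mul_one] at h2
  exact (commute_of_conj h2).symm

lemma central_of_gens (z : PresentedGroup (GRels p n))
    (h : ∀ i : Fin 4, Commute z (X p n i)) (g : PresentedGroup (GRels p n)) :
    Commute z g := by
  have hg : g ∈ Subgroup.centralizer {z} := by
    apply PresentedGroup.generated_by
    intro j
    rw [Subgroup.mem_centralizer_iff]
    intro y hy
    rw [Set.mem_singleton_iff] at hy
    subst hy
    exact h j
  exact Subgroup.mem_centralizer_iff.1 hg z (Set.mem_singleton z)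

lemma z1_central (g : PresentedGroup (GRels p n)) : Commute ((X p n 0)^(p^(n-2))) g := by
  apply central_of_gens
  intro i
  fin_cases i
  · exact (Commute.refl _).pow_left _
  · exact comm_z1_x1 p n
  · exact comm_z1_x2 p n
  · exact comm_z1_x3 p n

lemma z2_central (g : PresentedGroup (GRels p n)) : Commute ((X p n 1)^(p^2)) g := by
  apply central_of_gens
  intro i
  fin_cases i
  · exact comm_z2_x0 p n
  · exact (Commute.refl _).pow_left _
  · exact comm_z2_x2 p n
  · exact comm_z2_x3 p n

lemma z3_central (g : PresentedGroup (GRels p n)) : Commute ((X p n 2)^(p^2)) g := by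
  apply central_of_gens
  intro i
  fin_cases i
  · exact comm_z3_x0 p n
  · exact comm_z3_x1 p n
  · exact (Commute.refl _).pow_left _
  · exact comm_z3_x3 p n

lemma swap01 (u v : ℕ) : (X p n 1)^v * (X p n 0)^u
    = (X p n 0)^u * (X p n 1)^v * (((X p n 1)^(p^2))^(u*v))⁻¹ :=
  swap_pow (conj_of_cmt (R12 p n)) (z2_central p n _) (z2_central p n _) u v

lemma swap02 (u v : ℕ) : (X p n 2)^v * (X p n 0)^u
    = (X p n 0)^u * (X p n 2)^v * (((X p n 1)^(p^2))^(u*v))⁻¹ :=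
  swap_pow (conj_of_cmt (R13 p n)) (z2_central p n _) (z2_central p n _) u v

lemma swap03 (u v : ℕ) : (X p n 3)^v * (X p n 0)^u
    = (X p n 0)^u * (X p n 3)^v * (((X p n 2)^(p^2))^(u*v))⁻¹ :=
  swap_pow (conj_of_cmt (R14 p n)) (z3_central p n _) (z3_central p n _) u v

lemma swap12 (u v : ℕ) : (X p n 2)^v * (X p n 1)^u
    = (X p n 1)^u * (X p n 2)^v * (((X p n 0)^(p^(n-2)))^(u*v))⁻¹ :=
  swap_pow (conj_of_cmt (R23 p n)) (z1_central p n _) (z1_central p n _) u v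

lemma swap13 (u v : ℕ) : (X p n 3)^v * (X p n 1)^u
    = (X p n 1)^u * (X p n 3)^v * (((X p n 2)^(p^2))^(u*v))⁻¹ :=
  swap_pow (conj_of_cmt (R24 p n)) (z3_central p n _) (z3_central p n _) u v

lemma swap23 (u v : ℕ) : (X p n 3)^v * (X p n 2)^u
    = (X p n 2)^u * (X p n 3)^v * (((X p n 1)^(p^2))^(u*v))⁻¹ :=
  swap_pow (conj_of_cmt (R34 p n)) (z2_central p n _) (z2_central p n _) u v

lemma central_pull {H : Type*} [Group H] {w : H} (hw : ∀ g, Commute w g) (a b : H) :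
    a * (w * b) = w * (a * b) := by
  rw [← mul_assoc, ← (hw a).eq, mul_assoc]

lemma pow_val_pi4 {H : Type*} [Group H] {h : H} (hh : h ^ (p^2) = 1) (b : ZMod (p^4)) :
    h ^ ((M.pi4 p b).val) = h ^ b.val := by
  have e : M.pi4 p b = ((b.val : ℕ) : ZMod (p^2)) := by
    rw [M.pi4, ZMod.castHom_apply, ZMod.natCast_val]
  rw [e, pow_val_natCast hh]

lemma pow_val_pin {H : Type*} [Group H] {h : H} (hh : h ^ (p^2) = 1) (a : ZMod (p^n)) :
    h ^ ((M.pin p n a).val) = h ^ a.val := by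
  have e : M.pin p n a = ((a.val : ℕ) : ZMod (p^2)) := by
    rw [M.pin, ZMod.castHom_apply, ZMod.natCast_val]
  rw [e, pow_val_natCast hh]

lemma pow_val_e4M {H : Type*} [Group H] {h : H} (hh : h ^ (p^4) = 1) (w : ZMod (p^2)) :
    h ^ ((M.e4 p w).val) = (h ^ (p^2)) ^ w.val := by
  have hw : ((w.val : ℕ) : ZMod (p^2)) = w := by rw [ZMod.natCast_val, ZMod.cast_id]
  have e : M.e4 p w = ((p^2 * w.val : ℕ) : ZMod (p^4)) := by rw [← M.e4_natCast, hw]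
  rw [e, pow_val_natCast hh, pow_mul]

lemma pow_val_enM {H : Type*} [Group H] {h : H} (hh : h ^ (p^n) = 1) (w : ZMod (p^2)) :
    h ^ ((M.en p n w).val) = (h ^ (p^(n-2))) ^ w.val := by
  have hw : ((w.val : ℕ) : ZMod (p^2)) = w := by rw [ZMod.natCast_val, ZMod.cast_id]
  have e : M.en p n w = ((p^(n-2) * w.val : ℕ) : ZMod (p^n)) := by rw [← M.en_natCast, hw]
  rw [e, pow_val_natCast hh, pow_mul]

lemma g1_mul (y : M p n) : M.g1 * y = ⟨1 + y.a, y.b, y.c, y.d⟩ := by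
  ext <;> simp [M.mul_a, M.mul_b, M.mul_c, M.g1]

lemma g2_mul (y : M p n) : M.g2 * y = ⟨y.a, 1 + y.b - M.e4 p (M.pin p n y.a), y.c, y.d⟩ := by
  ext <;> simp [M.mul_a, M.mul_b, M.mul_c, M.g2, sub_eq_add_neg, add_assoc]

lemma g3_mul (y : M p n) : M.g3 * y =
    ⟨y.a - M.en p n (M.pi4 p y.b), y.b - M.e4 p (M.pin p n y.a), 1 + y.c, y.d⟩ := by
  ext <;> simp [M.mul_a, M.mul_b, M.mul_c, M.g3, sub_eq_add_neg, add_assoc, add_comm]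

lemma g4_mul (y : M p n) : M.g4 * y =
    ⟨y.a, y.b - M.e4 p (M.pi4 p y.c), y.c - M.e4 p (M.pin p n y.a + M.pi4 p y.b), 1 + y.d⟩ := by
  ext <;> simp [M.mul_a, M.mul_b, M.mul_c, M.g4, sub_eq_add_neg, add_assoc, add_comm]

def sig (x : M p n) : PresentedGroup (GRels p n) :=
  X p n 0 ^ x.a.val * (X p n 1 ^ x.b.val * (X p n 2 ^ x.c.val * X p n 3 ^ x.d.val))

lemma sig_g1 (y : M p n) : sig p n (M.g1 * y) = X p n 0 * sig p n y := by
  rw [g1_mul, sig, sig]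
  dsimp only
  rw [pow_val_add (O1 p n), pow_val_one (O1 p n), mul_assoc]

lemma sig_g2 (y : M p n) : sig p n (M.g2 * y) = X p n 1 * sig p n y := by
  rw [g2_mul, sig, sig]
  dsimp only
  rw [pow_val_sub (O2 p n), pow_val_add (O2 p n), pow_val_one (O2 p n),
    pow_val_e4M (p := p) (O2 p n), pow_val_pin (p := p) (n := n) (Z2sq p n)]
  have s := swap01 p n y.a.val 1
  rw [pow_one, mul_one] at s
  rw [← mul_assoc (X p n 1) (X p n 0 ^ y.a.val), s]
  have hw : ∀ g, Commute ((((X p n 1) ^ p^2) ^ y.a.val)⁻¹) g :=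
    fun g => ((z2_central p n g).pow_left _).inv_left
  simp only [mul_assoc]
  simp only [central_pull hw]

lemma sig_g3 (y : M p n) : sig p n (M.g3 * y) = X p n 2 * sig p n y := by
  rw [g3_mul, sig, sig]
  dsimp only
  rw [pow_val_sub (O1 p n), pow_val_enM (p := p) (n := n) (O1 p n), pow_val_pi4 (p := p) (Z1sq p n),
    pow_val_sub (O2 p n), pow_val_e4M (p := p) (O2 p n), pow_val_pin (p := p) (n := n) (Z2sq p n),
    pow_val_add (O3 p n), pow_val_one (O3 p n)]
  have s1 := swap02 p n y.a.val 1
  rw [pow_one, mul_one] at s1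
  have s2 := swap12 p n y.b.val 1
  rw [pow_one, mul_one] at s2
  rw [← mul_assoc (X p n 2) (X p n 0 ^ y.a.val), s1]
  have hw2 : ∀ g, Commute ((((X p n 1) ^ p^2) ^ y.a.val)⁻¹) g :=
    fun g => ((z2_central p n g).pow_left _).inv_left
  have hw1 : ∀ g, Commute ((((X p n 0) ^ p^(n-2)) ^ y.b.val)⁻¹) g :=
    fun g => ((z1_central p n g).pow_left _).inv_left
  simp only [mul_assoc]
  simp only [central_pull hw2]
  rw [← mul_assoc (X p n 2) (X p n 1 ^ y.b.val), s2]
  simp only [mul_assoc]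
  simp only [central_pull hw1]

lemma sig_g4 (y : M p n) : sig p n (M.g4 * y) = X p n 3 * sig p n y := by
  rw [g4_mul, sig, sig]
  dsimp only
  rw [pow_val_sub (O2 p n), pow_val_e4M (p := p) (O2 p n), pow_val_pi4 (p := p) (Z2sq p n),
    pow_val_sub (O3 p n), pow_val_e4M (p := p) (O3 p n), pow_val_add (Z3sq p n),
    pow_val_pin (p := p) (n := n) (Z3sq p n), pow_val_pi4 (p := p) (Z3sq p n),
    pow_val_add (O4 p n), pow_val_one (O4 p n)]
  have s1 := swap03 p n y.a.val 1
  rw [pow_one, mul_one] at s1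
  have s2 := swap13 p n y.b.val 1
  rw [pow_one, mul_one] at s2
  have s3 := swap23 p n y.c.val 1
  rw [pow_one, mul_one] at s3
  have hwa : ∀ g, Commute ((((X p n 2) ^ p^2) ^ y.a.val)⁻¹) g :=
    fun g => ((z3_central p n g).pow_left _).inv_left
  have hwb : ∀ g, Commute ((((X p n 2) ^ p^2) ^ y.b.val)⁻¹) g :=
    fun g => ((z3_central p n g).pow_left _).inv_left
  have hwc : ∀ g, Commute ((((X p n 1) ^ p^2) ^ y.c.val)⁻¹) g :=
    fun g => ((z2_central p n g).pow_left _).inv_left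
  rw [← mul_assoc (X p n 3) (X p n 0 ^ y.a.val), s1]
  simp only [mul_assoc]
  simp only [central_pull hwa]
  rw [← mul_assoc (X p n 3) (X p n 1 ^ y.b.val), s2]
  simp only [mul_assoc]
  simp only [central_pull hwb]
  rw [← mul_assoc (X p n 3) (X p n 2 ^ y.c.val), s3]
  simp only [mul_assoc, mul_inv_rev]
  simp only [central_pull hwa]
  simp only [central_pull hwc]
  simp only [central_pull hwb]

lemma sig_one : sig p n 1 = 1 := by
  simp [sig, ZMod.val_zero]

lemma sig_g1_inv (y : M p n) : sig p n (M.g1⁻¹ * y) = (X p n 0)⁻¹ * sig p n y := by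
  have h := sig_g1 p n (M.g1⁻¹ * y)
  rw [mul_inv_cancel_left] at h
  rw [h, inv_mul_cancel_left]

lemma sig_g2_inv (y : M p n) : sig p n (M.g2⁻¹ * y) = (X p n 1)⁻¹ * sig p n y := by
  have h := sig_g2 p n (M.g2⁻¹ * y)
  rw [mul_inv_cancel_left] at h
  rw [h, inv_mul_cancel_left]

lemma sig_g3_inv (y : M p n) : sig p n (M.g3⁻¹ * y) = (X p n 2)⁻¹ * sig p n y := by
  have h := sig_g3 p n (M.g3⁻¹ * y)
  rw [mul_inv_cancel_left] at h
  rw [h, inv_mul_cancel_left]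

lemma sig_g4_inv (y : M p n) : sig p n (M.g4⁻¹ * y) = (X p n 3)⁻¹ * sig p n y := by
  have h := sig_g4 p n (M.g4⁻¹ * y)
  rw [mul_inv_cancel_left] at h
  rw [h, inv_mul_cancel_left]

lemma sig_surj : ∀ g : PresentedGroup (GRels p n), ∃ m : M p n, sig p n m = g := by
  have key : ∀ w : FreeGroup (Fin 4), ∀ m : M p n,
      ∃ m' : M p n, sig p n m' = PresentedGroup.mk (GRels p n) w * sig p n m := by
    intro w
    induction w using FreeGroup.induction_on with
    | C1 => exact fun m => ⟨m, by rw [map_one, one_mul]⟩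
    | of i =>
      intro m
      fin_cases i
      · exact ⟨M.g1 * m, by rw [sig_g1]; rfl⟩
      · exact ⟨M.g2 * m, by rw [sig_g2]; rfl⟩
      · exact ⟨M.g3 * m, by rw [sig_g3]; rfl⟩
      · exact ⟨M.g4 * m, by rw [sig_g4]; rfl⟩
    | inv_of i _ =>
      intro m
      fin_cases i
      · exact ⟨M.g1⁻¹ * m, by rw [sig_g1_inv, map_inv]; rfl⟩
      · exact ⟨M.g2⁻¹ * m, by rw [sig_g2_inv, map_inv]; rfl⟩
      · exact ⟨M.g3⁻¹ * m, by rw [sig_g3_inv, map_inv]; rfl⟩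
      · exact ⟨M.g4⁻¹ * m, by rw [sig_g4_inv, map_inv]; rfl⟩
    | mul x y hx hy =>
      intro m
      obtain ⟨m1, h1⟩ := hy m
      obtain ⟨m2, h2⟩ := hx m1
      exact ⟨m2, by rw [h2, h1, map_mul, mul_assoc]⟩
  intro g
  induction g using PresentedGroup.induction_on with
  | _ w =>
    obtain ⟨m, hm⟩ := key w 1
    exact ⟨m, by rw [hm, sig_one, mul_one]⟩

noncomputable def F : PresentedGroup (GRels p n) →* M p n :=
  PresentedGroup.toGroup (M.relcheck (p := p) (n := n))

lemma F_X (i : Fin 4) : F p n (X p n i) = M.gen i :=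
  PresentedGroup.toGroup.of _

lemma F_sig (x : M p n) : F p n (sig p n x) = x := by
  rw [sig, map_mul, map_mul, map_mul, map_pow, map_pow, map_pow, map_pow,
    F_X, F_X, F_X, F_X]
  have e0 : M.gen (p := p) (n := n) 0 = M.g1 := rfl
  have e1 : M.gen (p := p) (n := n) 1 = M.g2 := rfl
  have e2 : M.gen (p := p) (n := n) 2 = M.g3 := rfl
  have e3 : M.gen (p := p) (n := n) 3 = M.g4 := rfl
  rw [e0, e1, e2, e3, M.g1_pow, M.g2_pow, M.g3_pow, M.g4_pow, M.prod_basis]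
  ext <;> simp [ZMod.natCast_val, ZMod.cast_id]

end pres
end GG

theorem group_G_order_and_class (p n : ℕ) (hp : p.Prime) (hodd : Odd p) (hn : 4 ≤ n) :
    Nat.card (PresentedGroup (GRels p n)) = p ^ (n + 10) ∧
    (⊤ : Subgroup (PresentedGroup (GRels p n))).lowerCentralSeries 2 = ⊥ ∧
    (⊤ : Subgroup (PresentedGroup (GRels p n))).lowerCentralSeries 1 ≠ ⊥ := by
  haveI : Fact p.Prime := ⟨hp⟩
  haveI : Fact (4 ≤ n) := ⟨hn⟩
  have hFs : ∀ x : GG.M p n, GG.F p n (GG.sig p n x) = x := GG.F_sig p n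
  have hsurj := GG.sig_surj p n
  have hFsurj : Function.Surjective (GG.F p n) := fun m => ⟨GG.sig p n m, hFs m⟩
  have hFinj : Function.Injective (GG.F p n) := by
    intro u v huv
    obtain ⟨mu, rfl⟩ := hsurj u
    obtain ⟨mv, rfl⟩ := hsurj v
    rw [hFs, hFs] at huv
    rw [huv]
  refine ⟨?_, ?_, ?_⟩
  · have h := Nat.card_eq_of_bijective (GG.F p n) ⟨hFinj, hFsurj⟩
    rw [h, GG.M.card_M]
  · apply Subgroup.lowerCentralSeries_succ_eq_bot (n := 1)
    rw [Subgroup.top_lowerCentralSeries_one, commutator_eq_closure]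
    refine (Subgroup.closure_le _).2 ?_
    rintro c ⟨g, h, rfl⟩
    rw [SetLike.mem_coe, Subgroup.mem_center_iff]
    intro k
    apply hFinj
    simp only [map_mul, map_commutatorElement]
    exact (GG.M.commutator_central (GG.F p n g) (GG.F p n h) (GG.F p n k)).symm
  · intro hbot
    have hm : ⁅GG.X p n 0, GG.X p n 1⁆ ∈
        (⊤ : Subgroup (PresentedGroup (GRels p n))).lowerCentralSeries 1 := by
      rw [Subgroup.top_lowerCentralSeries_one]
      exact Subgroup.commutator_mem_commutator (Subgroup.mem_top _) (Subgroup.mem_top _)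
    rw [hbot, Subgroup.mem_bot] at hm
    have h1 := congrArg (GG.F p n) hm
    rw [map_commutatorElement, map_one, GG.F_X, GG.F_X] at h1
    have e0 : GG.M.gen (p := p) (n := n) 0 = GG.M.g1 := rfl
    have e1 : GG.M.gen (p := p) (n := n) 1 = GG.M.g2 := rfl
    rw [e0, e1] at h1
    have h2 : (GG.M.g1 : GG.M p n) * GG.M.g2 = GG.M.g2 * GG.M.g1 :=
      commutatorElement_eq_one_iff_mul_comm.1 h1
    have hb := congrArg GG.M.b h2
    rw [GG.M.mul_b, GG.M.mul_b] at hb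
    simp [GG.M.g1, GG.M.g2] at hb
    have hz : ((p^2 : ℕ) : ZMod (p^4)) = 0 := by
      rw [← GG.M.e4_one]
      linear_combination hb
    
    have hdvd : p^4 ∣ p^2 := (ZMod.natCast_eq_zero_iff _ _).1 hz
    have hlt : p^2 < p^4 := by
      have := hp.one_lt
      calc p^2 < p^2 * p^2 := by nlinarith [pow_pos hp.pos 2]
      _ = p^4 := by ring
    have := Nat.le_of_dvd (pow_pos hp.pos 2) hdvd
    omega
end

section
/- Let G be a purely non-abelian finite p-group (a finite p-group with no nontrivial abelian direct factor). Then the order of Autcent(G) equals the order of Hom(G/γ₂(G), Z(G)). -/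
namespace AutcentAux

variable {G : Type} [Group G]

/-- The endomorphism `x ↦ x * F x` for a hom `F : G →* Z(G)`. -/
def sigmaHom (F : G →* Subgroup.center G) : G →* G where
  toFun x := x * (F x : G)
  map_one' := by simp
  map_mul' x y := by
    have hc : (F x : G) * y = y * (F x : G) :=
      (Subgroup.mem_center_iff.mp (F x).2 y).symm
    calc x * y * ((F (x*y) : Subgroup.center G) : G)
        = x * y * ((F x : G) * (F y : G)) := by rw [map_mul]; push_cast; ring_nf
      _ = x * ((F x : G) * y) * (F y : G) := by rw [hc]; group
      _ = x * (F x : G) * (y * (F y : G)) := by group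

@[simp] lemma sigmaHom_apply (F : G →* Subgroup.center G) (x : G) :
    sigmaHom F x = x * (F x : G) := rfl

/-- `n`-fold composition power of an endomorphism. -/
def powHom (σ : G →* G) : ℕ → (G →* G)
  | 0 => MonoidHom.id G
  | (n+1) => σ.comp (powHom σ n)

lemma powHom_add (σ : G →* G) (a b : ℕ) :
    powHom σ (a + b) = (powHom σ a).comp (powHom σ b) := by
  induction a with
  | zero => simp [powHom, MonoidHom.id_comp]
  | succ n ih =>
      have : n + 1 + b = (n + b) + 1 := by omega
      rw [this]
      show σ.comp (powHom σ (n + b)) = (σ.comp (powHom σ n)).comp (powHom σ b)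
      rw [ih, MonoidHom.comp_assoc]

lemma powHom_central (F : G →* Subgroup.center G) (n : ℕ) (x : G) :
    x⁻¹ * powHom (sigmaHom F) n x ∈ Subgroup.center G := by
  induction n with
  | zero =>
      show x⁻¹ * x ∈ _
      simp [Subgroup.one_mem]
  | succ n ih =>
      set z := x⁻¹ * powHom (sigmaHom F) n x with hz
      have hx : powHom (sigmaHom F) n x = x * z := by rw [hz]; group
      show x⁻¹ * sigmaHom F (powHom (sigmaHom F) n x) ∈ _
      have : x⁻¹ * sigmaHom F (x * z) = (F x : G) * (z * (F z : G)) := by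
        have hcz : (F x : G) * z = z * (F x : G) :=
          (Subgroup.mem_center_iff.mp (F x).2 z).symm
        rw [map_mul, sigmaHom_apply, sigmaHom_apply]
        calc x⁻¹ * (x * (F x : G) * (z * (F z : G)))
            = (F x : G) * z * (F z : G) := by group
          _ = (F x : G) * (z * (F z : G)) := by group
      rw [hx, this]
      exact Subgroup.mul_mem _ (F x).2 (Subgroup.mul_mem _ ih (F z).2)

/-- Key lemma: for a "purely non-abelian" finite group, every central
endomorphism `x ↦ x * F x` is injective. -/
lemma sigmaHom_injective [Finite G]
    (hpna : ¬∃ H K : Subgroup G, H.Normal ∧ K.Normal ∧ IsCompl H K ∧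
      Nontrivial K ∧ ∀ a b : K, a * b = b * a)
    (F : G →* Subgroup.center G) : Function.Injective (sigmaHom F) := by
  set σ := sigmaHom F with hσ
  by_contra hinj
  -- get a nontrivial kernel element
  rw [injective_iff_map_eq_one] at hinj
  push_neg at hinj
  obtain ⟨x₀, hx₀, hx₀ne⟩ := hinj
  -- find an idempotent power
  have hfin : Finite (G →* G) :=
    Finite.of_injective (fun g => (g : G → G)) DFunLike.coe_injective
  obtain ⟨i, j, hij, hpow⟩ :=
    Finite.exists_ne_map_eq_of_infinite (fun n : ℕ => powHom σ (n + 1))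
  wlog hij' : i < j generalizing i j
  · exact this j i hij.symm hpow.symm (by omega)
  set a := i + 1 with ha
  set d := j - i with hd
  have hd1 : 1 ≤ d := by omega
  have ha1 : 1 ≤ a := by omega
  have hper : powHom σ (a + d) = powHom σ a := by
    have : j + 1 = a + d := by omega
    simpa [this] using hpow.symm
  have hper' : ∀ s, powHom σ (a + d + s) = powHom σ (a + s) := by
    intro s
    have h1 : a + d + s = s + (a + d) := by omega
    have h2 : a + s = s + a := by omega
    rw [h1, h2, powHom_add σ s (a+d), hper, ← powHom_add]
  have hper2 : ∀ t n, a ≤ n → powHom σ (n + t * d) = powHom σ n := by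
    intro t
    induction t with
    | zero => intro n _; simp
    | succ t ih =>
        intro n hn
        have hdd : (t + 1) * d = t * d + d := by ring
        have h1 : n + (t + 1) * d = (a + d) + (n - a + t * d) := by
          rw [hdd]; omega
        have h2 : (a + (n - a + t * d)) = (n + t * d) := by omega
        rw [h1, hper' (n - a + t * d), h2, ih n hn]
  set m := a * d with hm
  have hma : a ≤ m := Nat.le_mul_of_pos_right a (by omega)
  have hm1 : 1 ≤ m := Nat.mul_pos ha1 hd1
  set E := powHom σ m with hE
  have hidem : ∀ x, E (E x) = E x := by
    intro x
    have h1 : powHom σ (m + m) = powHom σ m := by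
      have : m + m = m + a * d := by omega
      rw [this]; exact hper2 a m hma
    have h2 := congrArg (fun f => (f : G →* G) x) ((powHom_add σ m m).symm.trans h1)
    simpa using h2
  -- the chosen element is in the kernel of E
  have hx₀E : E x₀ = 1 := by
    obtain ⟨k, hk⟩ : ∃ k, m = k + 1 := ⟨m - 1, by omega⟩
    have : E = (powHom σ k).comp (powHom σ 1) := by
      rw [hE, hk, powHom_add]
    rw [this]
    show powHom σ k (powHom σ 1 x₀) = 1
    have h1 : powHom σ 1 x₀ = σ x₀ := by
      show σ.comp (MonoidHom.id G) x₀ = σ x₀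
      rfl
    rw [h1, hx₀, map_one]
  -- kernel is central
  have hker_central : ∀ n ∈ E.ker, n ∈ Subgroup.center G := by
    intro n hn
    have h1 : n⁻¹ * E n ∈ Subgroup.center G := powHom_central F m n
    rw [MonoidHom.mem_ker.mp hn, mul_one] at h1
    simpa using Subgroup.inv_mem _ h1
  -- decomposition element: for any g, g * (E g)⁻¹ ∈ ker
  have hdec : ∀ g : G, (E g)⁻¹ * g ∈ E.ker := by
    intro g
    rw [MonoidHom.mem_ker, map_mul, map_inv, hidem, inv_mul_cancel]
  refine hpna ⟨E.range, E.ker, ?_, MonoidHom.normal_ker E, ?_, ?_, ?_⟩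
  · -- range is normal
    constructor
    intro h hh g
    obtain ⟨y, rfl⟩ := hh
    have hn : (E g)⁻¹ * g ∈ Subgroup.center G := hker_central _ (hdec g)
    have hg : g = (E g) * ((E g)⁻¹ * g) := by group
    have hcomm : ∀ w : G, ((E g)⁻¹ * g) * w = w * ((E g)⁻¹ * g) :=
      fun w => (Subgroup.mem_center_iff.mp hn w).symm
    refine ⟨g * y * g⁻¹, ?_⟩
    rw [map_mul, map_mul]
    -- E g * E y * E g⁻¹  vs  g * E y * g⁻¹
    have : g * E y * g⁻¹ = E g * E y * (E g)⁻¹ := by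
      conv_lhs => rw [hg]
      have h2 : ((E g) * ((E g)⁻¹ * g))⁻¹ = ((E g)⁻¹ * g)⁻¹ * (E g)⁻¹ := by group
      rw [h2]
      calc (E g) * ((E g)⁻¹ * g) * E y * (((E g)⁻¹ * g)⁻¹ * (E g)⁻¹)
          = (E g) * (((E g)⁻¹ * g) * E y * ((E g)⁻¹ * g)⁻¹) * (E g)⁻¹ := by group
        _ = (E g) * (E y * ((E g)⁻¹ * g) * ((E g)⁻¹ * g)⁻¹) * (E g)⁻¹ := by
              rw [hcomm (E y)]
        _ = E g * E y * (E g)⁻¹ := by group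
    rw [map_inv]
    exact this.symm
  · -- IsCompl range ker
    constructor
    · rw [Subgroup.disjoint_def]
      intro x hxr hxk
      obtain ⟨y, rfl⟩ := hxr
      have := MonoidHom.mem_ker.mp hxk
      rw [hidem] at this
      exact this
    · rw [codisjoint_iff, eq_top_iff]
      intro g _
      have : g = (E g) * ((E g)⁻¹ * g) := by group
      rw [this]
      exact Subgroup.mul_mem_sup ⟨g, rfl⟩ (hdec g)
  · -- ker nontrivial
    exact (Subgroup.nontrivial_iff_exists_ne_one E.ker).mpr
      ⟨x₀, MonoidHom.mem_ker.mpr hx₀E, hx₀ne⟩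
  · -- ker abelian
    intro a b
    apply Subtype.ext
    show (a : G) * b = (b : G) * a
    exact (Subgroup.mem_center_iff.mp (hker_central _ a.2) b).symm

/-- The hom `G →* Z(G)` attached to a central automorphism. -/
def toHomG (α : MulAut G) (hα : ∀ x : G, x⁻¹ * α x ∈ Subgroup.center G) :
    G →* Subgroup.center G where
  toFun x := ⟨x⁻¹ * α x, hα x⟩
  map_one' := by ext; simp
  map_mul' x y := by
    ext
    show (x * y)⁻¹ * α (x * y) = (x⁻¹ * α x) * (y⁻¹ * α y)
    have hc : (x⁻¹ * α x) * y⁻¹ = y⁻¹ * (x⁻¹ * α x) :=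
      (Subgroup.mem_center_iff.mp (hα x) y⁻¹).symm
    rw [map_mul]
    calc (x * y)⁻¹ * (α x * α y) = y⁻¹ * (x⁻¹ * α x) * α y := by group
      _ = (x⁻¹ * α x) * y⁻¹ * α y := by rw [← hc]
      _ = (x⁻¹ * α x) * (y⁻¹ * α y) := by group

lemma toHomG_ker (α : MulAut G) (hα : ∀ x : G, x⁻¹ * α x ∈ Subgroup.center G) :
    ∀ x ∈ commutator G, toHomG α hα x = 1 := by
  have h : commutator G ≤ (toHomG α hα).ker := by
    rw [commutator_def, Subgroup.commutator_le]
    intro g₁ _ g₂ _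
    rw [MonoidHom.mem_ker, map_commutatorElement]
    exact commutatorElement_eq_one_iff_mul_comm.mpr
      (Subtype.ext ((Subgroup.mem_center_iff.mp (toHomG α hα g₁).2 _).symm))
  intro x hx
  exact MonoidHom.mem_ker.mp (h hx)

end AutcentAux

open AutcentAux in
theorem autcent_card_eq_hom_card (p : ℕ) (hp : p.Prime)
    (G : Type) [Group G] [Finite G] (hpG : IsPGroup p G)
    (hpna : ¬∃ H K : Subgroup G, H.Normal ∧ K.Normal ∧ IsCompl H K ∧
      Nontrivial K ∧ ∀ a b : K, a * b = b * a) :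
    Nat.card {α : MulAut G // ∀ x : G, x⁻¹ * α x ∈ Subgroup.center G} =
      Nat.card ((G ⧸ commutator G) →* Subgroup.center G) := by
  apply Nat.card_congr
  -- backward construction
  have bij : ∀ f : (G ⧸ commutator G) →* Subgroup.center G,
      Function.Bijective (sigmaHom (f.comp (QuotientGroup.mk' (commutator G)))) := by
    intro f
    have hinj := sigmaHom_injective hpna (f.comp (QuotientGroup.mk' (commutator G)))
    exact ⟨hinj, Finite.surjective_of_injective hinj⟩
  refine
    { toFun := fun a => QuotientGroup.lift (commutator G) (toHomG a.1 a.2)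
        (fun x hx => MonoidHom.mem_ker.mpr (toHomG_ker a.1 a.2 x hx))
      invFun := fun f =>
        ⟨MulEquiv.ofBijective _ (bij f), fun x => by
          have : (MulEquiv.ofBijective _ (bij f)) x =
              x * ((f.comp (QuotientGroup.mk' (commutator G))) x : G) := rfl
          rw [this]
          have h2 : x⁻¹ * (x * ((f.comp (QuotientGroup.mk' (commutator G))) x : G)) =
              ((f.comp (QuotientGroup.mk' (commutator G))) x : G) := by group
          rw [h2]
          exact ((f.comp (QuotientGroup.mk' (commutator G))) x).2⟩
      left_inv := ?_
      right_inv := ?_ }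
  · rintro ⟨α, hα⟩
    apply Subtype.ext
    apply MulEquiv.ext
    intro x
    show x * (((toHomG α hα) x : Subgroup.center G) : G) = α x
    show x * (x⁻¹ * α x) = α x
    group
  · intro f
    apply MonoidHom.ext
    intro q
    induction q using QuotientGroup.induction_on with
    | H x =>
      rw [QuotientGroup.lift_mk']
      apply Subtype.ext
      show x⁻¹ * (MulEquiv.ofBijective _ (bij f) x) =
        ((f (QuotientGroup.mk x) : Subgroup.center G) : G)
      have : (MulEquiv.ofBijective _ (bij f)) x =
          x * ((f.comp (QuotientGroup.mk' (commutator G))) x : G) := rfl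
      rw [this]
      have h3 : x⁻¹ * (x * ((f.comp (QuotientGroup.mk' (commutator G))) x : G)) =
          ((f.comp (QuotientGroup.mk' (commutator G))) x : G) := by group
      rw [h3]
      rfl
end

section
/- Let p be a prime and G a finite p-group such that Z(G) has exponent p and Φ(G) is strictly contained in Z(G). Then G has a nontrivial abelian direct factor; equivalently, G is not purely non-abelian. -/
theorem abelian_direct_factor_of_center_exp_p (p : ℕ) (hp : p.Prime)
    (G : Type) [Group G] [Finite G] (hpG : IsPGroup p G)
    (hZ : Monoid.exponent (Subgroup.center G) = p)
    (hlt : frattini G < Subgroup.center G) :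
    ∃ H K : Subgroup G, H.Normal ∧ K.Normal ∧ IsCompl H K ∧
      Nontrivial K ∧ ∀ a b : K, a * b = b * a := by
  haveI : Fact p.Prime := ⟨hp⟩
  haveI : Group.IsNilpotent G := hpG.isNilpotent
  obtain ⟨x, hxZ, hxF⟩ := SetLike.exists_of_lt hlt
  have hx1 : x ≠ 1 := fun h => hxF (h ▸ (frattini G).one_mem)
  -- x has order p
  have hxp : x ^ p = 1 := by
    have := Monoid.pow_exponent_eq_one (⟨x, hxZ⟩ : Subgroup.center G)
    rw [hZ] at this
    exact congrArg Subtype.val this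
  have hord : orderOf x = p := by
    rcases (Nat.dvd_prime hp).1 (orderOf_dvd_of_pow_eq_one hxp) with h | h
    · exact absurd (orderOf_eq_one_iff.1 h) hx1
    · exact h
  -- maximal subgroup avoiding x
  have hM : ∃ M : Subgroup G, IsCoatom M ∧ x ∉ M := by
    by_contra h
    push_neg at h
    apply hxF
    rw [frattini, Order.radical]
    simp only [Subgroup.mem_iInf]
    exact fun M hm => h M hm
  obtain ⟨M, hM, hxM⟩ := hM
  set K := Subgroup.zpowers x with hK
  have hKZ : K ≤ Subgroup.center G := by
    rw [hK, Subgroup.zpowers_le]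
    exact hxZ
  have hKnorm : K.Normal := by
    constructor
    intro n hn g
    rw [(Subgroup.mem_center_iff.1 (hKZ hn)) g, mul_assoc, mul_inv_cancel, mul_one]
    exact hn
  have hMnorm : M.Normal :=
    Subgroup.NormalizerCondition.normal_of_coatom M normalizerCondition_of_isNilpotent hM
  have hcardK : Nat.card K = p := by rw [hK, Nat.card_zpowers, hord]
  -- disjoint
  have hdisj : Disjoint M K := by
    rw [disjoint_iff]
    by_contra hne
    have hle : M ⊓ K ≤ K := inf_le_right
    have hdvd : Nat.card (M ⊓ K : Subgroup G) ∣ Nat.card K :=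
      Subgroup.card_dvd_of_le hle
    rw [hcardK] at hdvd
    rcases (Nat.dvd_prime hp).1 hdvd with h | h
    · exact hne (Subgroup.card_eq_one.1 h)
    · have heq : M ⊓ K = K := Subgroup.eq_of_le_of_card_ge hle (by rw [h, hcardK])
      have : x ∈ M ⊓ K := heq.ge (Subgroup.mem_zpowers x)
      exact hxM this.1
  have hcodis : Codisjoint M K := by
    rw [codisjoint_iff]
    apply hM.2
    refine lt_of_le_of_ne le_sup_left fun h => hxM ?_
    rw [h]
    exact Subgroup.mem_sup_right (Subgroup.mem_zpowers x)
  refine ⟨M, K, hMnorm, hKnorm, ⟨hdisj, hcodis⟩, ?_, ?_⟩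
  · exact ⟨⟨⟨x, Subgroup.mem_zpowers x⟩, 1, fun h => hx1 (congrArg Subtype.val h)⟩⟩
  · intro a b
    ext
    exact Subgroup.mem_center_iff.1 (hKZ b.2) a.1
end
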